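/- For 0 < q < 1 and nonzero complex α, β, w with α β² = −1, one has 1 / [ θ_{q²}(q · αβ/(q^{1/2} w)) · θ_{q²}(q · αβ w / q^{1/2}) ] = 2αβ / [ −θ_q(αβ/q^{1/2}) θ_q(w/(αβ²)) + θ_q(w) θ_q(1/(β q^{1/2})) ], provided the denominators are nonzero. -/

import Mathlib

open Complex

/-- Jacobi theta function `θ_q(z) = Σ_{n ∈ ℤ} q^(n²/2) (−z)^n`. -/
noncomputable def jacobiTheta' (q : ℝ) (z : ℂ) : ℂ :=
  ∑' n : ℤ, ((q ^ (((n : ℝ) ^ 2) / 2) : ℝ) : ℂ) * (-z) ^ n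

/-!
Expand `θ_q(x) θ_q(y) - θ_q(-x) θ_q(-y)` as a double series over `(m, n) ∈ ℤ²`: the terms with
`m + n` even cancel and those with `m + n` odd double. Writing `m = r + s + 1`, `n = r - s`, the
weight `q^((m² + n²)/2) = q^(1/2) q^(r² + r) q^(s² + s)` separates, and the double series factors as
`-2 x √q θ_{q²}(-q x y) θ_{q²}(-q x / y)`. Since `α = -1/β²`, the theorem is this identity at
`x = 1/(β √q)`, `y = w`.
-/

noncomputable def jacobiTheta'_term (q : ℝ) (z : ℂ) (n : ℤ) : ℂ :=
  ((q ^ (((n : ℝ) ^ 2) / 2) : ℝ) : ℂ) * (-z) ^ n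

section

variable {q : ℝ} {x y z : ℂ}

lemma jacobiTheta'_eq_tsum (q : ℝ) (z : ℂ) :
    jacobiTheta' q z = ∑' n, jacobiTheta'_term q z n := rfl

-- `jacobiTheta'_term q z n` and Mathlib's `jacobiTheta₂_term n u τ` have the same modulus when
-- `|exp (π i τ)| = √q` and `|exp (2 π i u)| = ‖z‖`.
lemma norm_jacobiTheta'_term (hq : 0 < q) (hz : z ≠ 0) (n : ℤ) :
    ‖jacobiTheta'_term q z n‖ = ‖jacobiTheta₂_term n
      (↑(-(Real.log ‖z‖ / (2 * Real.pi))) * I) (↑(-(Real.log q / (2 * Real.pi))) * I)‖ := by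
  have hz' : 0 < ‖z‖ := norm_pos_iff.mpr hz
  rw [norm_jacobiTheta₂_term, jacobiTheta'_term, norm_mul, Complex.norm_real, norm_zpow, norm_neg,
    Real.norm_of_nonneg (Real.rpow_nonneg hq.le _), Real.rpow_def_of_pos hq,
    ← Real.rpow_intCast, Real.rpow_def_of_pos hz', ← Real.exp_add]
  simp only [mul_im, ofReal_re, I_im, ofReal_im, I_re]
  congr 1
  field_simp
  ring

lemma summable_norm_jacobiTheta'_term (hq : 0 < q) (hq1 : q < 1) (hz : z ≠ 0) :
    Summable (‖jacobiTheta'_term q z ·‖) := by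
  simp_rw [norm_jacobiTheta'_term hq hz]
  refine summable_norm_iff.mpr ((summable_jacobiTheta₂_term_iff _ _).mpr ?_)
  have : Real.log q < 0 := Real.log_neg hq hq1
  simp only [mul_im, ofReal_re, I_im, ofReal_im, I_re]
  have := Real.pi_pos
  field_simp
  linarith

lemma jacobiTheta'_term_neg (q : ℝ) (z : ℂ) (n : ℤ) :
    jacobiTheta'_term q (-z) n = (-1) ^ n * jacobiTheta'_term q z n := by
  rw [jacobiTheta'_term, jacobiTheta'_term, mul_left_comm, ← mul_zpow, neg_one_mul]

lemma jacobiTheta'_term_eq_zpow (hq : 0 ≤ q) (z : ℂ) (n : ℤ) :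
    jacobiTheta'_term q z n = (√q : ℂ) ^ (n ^ 2) * (-z) ^ n := by
  rw [jacobiTheta'_term, Real.sqrt_eq_rpow, ← ofReal_zpow, ← Real.rpow_intCast, ← Real.rpow_mul hq]
  push_cast
  ring_nf

lemma jacobiTheta'_term_mul_term (hq : 0 < q) (hx : x ≠ 0) (hy : y ≠ 0) (r s : ℤ) :
    jacobiTheta'_term q x (r + s + 1) * jacobiTheta'_term q y (r - s) =
      -(x * √q) * (jacobiTheta'_term (q ^ 2) (-(q * x * y)) r *
        jacobiTheta'_term (q ^ 2) (-(q * x / y)) s) := by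
  set P : ℂ := (√q : ℂ)
  have hP : P ≠ 0 := by simpa [P] using (Real.sqrt_pos.mpr hq).ne'
  have hqP : (q : ℂ) = P ^ 2 := by simp [P, ← ofReal_pow, Real.sq_sqrt hq.le]
  simp only [jacobiTheta'_term_eq_zpow hq.le, jacobiTheta'_term_eq_zpow (sq_nonneg q),
    Real.sqrt_sq hq.le, neg_neg]
  have hpowers : P ^ ((r + s + 1) ^ 2) * P ^ ((r - s) ^ 2) =
      P * ((q : ℂ) ^ (r ^ 2) * (q : ℂ) ^ r) * ((q : ℂ) ^ (s ^ 2) * (q : ℂ) ^ s) := by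
    rw [hqP, ← zpow_add₀ hP, ← zpow_natCast, ← zpow_mul, ← zpow_mul, ← zpow_mul, ← zpow_mul,
      ← zpow_add₀ hP, ← zpow_add₀ hP, ← zpow_one_add₀ hP, ← zpow_add₀ hP]
    congr 1
    push_cast
    ring
  have hsigns : (-x) ^ (r + s + 1) * (-y) ^ (r - s) = -(x ^ (r + s + 1) * y ^ (r - s)) := by
    have hodd : Odd (r + s + 1 + (r - s)) := ⟨r, by ring⟩
    rw [neg_eq_neg_one_mul x, neg_eq_neg_one_mul y, mul_zpow, mul_zpow, mul_mul_mul_comm,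
      ← zpow_add₀ (by norm_num), hodd.neg_one_zpow, neg_one_mul]
  calc P ^ ((r + s + 1) ^ 2) * (-x) ^ (r + s + 1) * (P ^ ((r - s) ^ 2) * (-y) ^ (r - s))
      = P ^ ((r + s + 1) ^ 2) * P ^ ((r - s) ^ 2) * ((-x) ^ (r + s + 1) * (-y) ^ (r - s)) := by
        ring
    _ = _ := by
      rw [hpowers, hsigns, mul_zpow, mul_zpow, div_zpow, mul_zpow, zpow_add_one₀ hx,
        zpow_add₀ hx, zpow_sub₀ hy]
      field_simp

lemma jacobiTheta'_term_mul_sub_neg_mul (q : ℝ) (x y : ℂ) (m n : ℤ) :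
    jacobiTheta'_term q x m * jacobiTheta'_term q y n -
        jacobiTheta'_term q (-x) m * jacobiTheta'_term q (-y) n =
      (1 - (-1) ^ (m + n)) * (jacobiTheta'_term q x m * jacobiTheta'_term q y n) := by
  rw [jacobiTheta'_term_neg, jacobiTheta'_term_neg, zpow_add₀ (by norm_num)]
  ring

theorem jacobiTheta'_mul_sub_neg_mul (hq : 0 < q) (hq1 : q < 1) (hx : x ≠ 0) (hy : y ≠ 0) :
    jacobiTheta' q x * jacobiTheta' q y - jacobiTheta' q (-x) * jacobiTheta' q (-y) =
      -2 * x * √q *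
        (jacobiTheta' (q ^ 2) (-(q * x * y)) * jacobiTheta' (q ^ 2) (-(q * x / y))) := by
  have hq0 : (q : ℂ) ≠ 0 := ofReal_ne_zero.mpr hq.ne'
  have hsum {z : ℂ} (hz : z ≠ 0) := summable_norm_jacobiTheta'_term hq hq1 hz
  have hsum₂ {z : ℂ} (hz : z ≠ 0) :=
    summable_norm_jacobiTheta'_term (pow_pos hq 2) (pow_lt_one₀ hq.le hq1 two_ne_zero) hz
  have hinj : Function.Injective (fun p : ℤ × ℤ ↦ (p.1 + p.2 + 1, p.1 - p.2)) := by
    intro a b h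
    simp only [Prod.mk.injEq] at h
    ext <;> omega
  simp only [jacobiTheta'_eq_tsum]
  -- After expanding both products as double series, only the pairs with `m + n` odd survive,
  -- and these are exactly the pairs `(r + s + 1, r - s)`.
  rw [tsum_mul_tsum_of_summable_norm (hsum hx) (hsum hy),
    tsum_mul_tsum_of_summable_norm (hsum (neg_ne_zero.mpr hx)) (hsum (neg_ne_zero.mpr hy)),
    tsum_mul_tsum_of_summable_norm (hsum₂ (by simp [hq0, hx, hy]))
      (hsum₂ (by simp [hq0, hx, hy])),
    ← (summable_mul_of_summable_norm (hsum hx) (hsum hy)).tsum_sub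
      (summable_mul_of_summable_norm (hsum (neg_ne_zero.mpr hx)) (hsum (neg_ne_zero.mpr hy))),
    ← tsum_mul_left, ← hinj.tsum_eq]
  · refine tsum_congr fun ⟨r, s⟩ ↦ ?_
    have hodd : Odd (r + s + 1 + (r - s)) := ⟨r, by ring⟩
    rw [jacobiTheta'_term_mul_sub_neg_mul, hodd.neg_one_zpow, jacobiTheta'_term_mul_term hq hx hy]
    ring
  · rw [Function.support_subset_iff']
    intro ⟨m, n⟩ hmn
    have heven : Even (m + n) := by
      rw [← Int.not_odd_iff_even]
      rintro ⟨r, hr⟩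
      exact hmn ⟨(r, m - r - 1), by simp only [Prod.mk.injEq]; omega⟩
    rw [jacobiTheta'_term_mul_sub_neg_mul, heven.neg_one_zpow, sub_self, zero_mul]

end

theorem theta_sum_formula_shifted_general (q : ℝ) (α β w : ℂ)
    (hq : 0 < q) (hq1 : q < 1) (hw : w ≠ 0)
    (hc : α * β ^ 2 = -1) :
    1 / (jacobiTheta' (q ^ 2) ((q : ℂ) * (α * β / ((Real.sqrt q : ℂ) * w))) *
          jacobiTheta' (q ^ 2) ((q : ℂ) * (α * β * w / (Real.sqrt q : ℂ)))) =
      2 * α * β /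
        (-(jacobiTheta' q (α * β / (Real.sqrt q : ℂ)) * jacobiTheta' q (w / (α * β ^ 2))) +
          jacobiTheta' q w * jacobiTheta' q (1 / (β * (Real.sqrt q : ℂ)))) := by
  have hβ : β ≠ 0 := by rintro rfl; simp at hc
  have hs : (√q : ℂ) ≠ 0 := ofReal_ne_zero.mpr (Real.sqrt_pos.mpr hq).ne'
  have hαβ : α * β = -β⁻¹ := by
    field_simp
    linear_combination hc
  set c := 1 / (β * (√q : ℂ)) with hc_def
  have hc0 : c ≠ 0 := one_div_ne_zero (mul_ne_zero hβ hs)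
  have h₁ : α * β / (√q : ℂ) = -c := by
    rw [hαβ, hc_def]; field_simp
  have h₂ : w / (α * β ^ 2) = -w := by
    rw [hc]; field_simp
  have h₃ : (q : ℂ) * (α * β / ((√q : ℂ) * w)) = -(q * c / w) := by
    rw [hαβ, hc_def]; field_simp
  have h₄ : (q : ℂ) * (α * β * w / (√q : ℂ)) = -(q * c * w) := by
    rw [hαβ, hc_def]; field_simp
  have h₅ : -2 * c * (√q : ℂ) = 2 * α * β := by
    rw [mul_assoc 2, hαβ, hc_def]; field_simp
  rw [h₁, h₂, h₃, h₄, neg_add_eq_sub, mul_comm (jacobiTheta' q w),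
    jacobiTheta'_mul_sub_neg_mul hq hq1 hc0 hw, h₅, one_div,
    mul_comm (jacobiTheta' _ (-(q * c / w))),
    div_mul_cancel_left₀ (by rw [mul_assoc, hαβ]; simp [hβ])]

theorem theta_sum_formula_shifted (q : ℝ) (α β w : ℂ)
    (hq : 0 < q) (hq1 : q < 1) (hα : α ≠ 0) (hβ : β ≠ 0) (hw : w ≠ 0)
    (hc : α * β ^ 2 = -1)
    (hd1 : jacobiTheta' (q ^ 2) ((q : ℂ) * (α * β / ((Real.sqrt q : ℂ) * w))) *
            jacobiTheta' (q ^ 2) ((q : ℂ) * (α * β * w / (Real.sqrt q : ℂ))) ≠ 0)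
    (hd2 : -(jacobiTheta' q (α * β / (Real.sqrt q : ℂ)) * jacobiTheta' q (w / (α * β ^ 2))) +
            jacobiTheta' q w * jacobiTheta' q (1 / (β * (Real.sqrt q : ℂ))) ≠ 0) :
    1 / (jacobiTheta' (q ^ 2) ((q : ℂ) * (α * β / ((Real.sqrt q : ℂ) * w))) *
          jacobiTheta' (q ^ 2) ((q : ℂ) * (α * β * w / (Real.sqrt q : ℂ)))) =
      2 * α * β /
        (-(jacobiTheta' q (α * β / (Real.sqrt q : ℂ)) * jacobiTheta' q (w / (α * β ^ 2))) +
          jacobiTheta' q w * jacobiTheta' q (1 / (β * (Real.sqrt q : ℂ)))) :=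
  theta_sum_formula_shifted_general q α β w hq hq1 hw hc
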